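/- arXiv:2603.10763 — 3 statements merged into one kernel-verified Lean document; each statement's English description precedes it below -/
import Mathlib

section
/- Let l, K ≥ 1, L > 0, η > 0. Let F : ℝ^l → ℝ (on EuclideanSpace ℝ (Fin l)) have a gradient map ∇F satisfying F(w') ≤ F(w) + ⟨∇F(w), w' − w⟩ + (L/2)‖w' − w‖² for all w, w'. Fix w ∈ ℝ^l and set g := ∇F(w). Let g_1,…,g_K ∈ ℝ^l satisfy (1/K)∑_k g_k = g, with every coordinate of each g_k nonzero and ‖g_k − g‖ ≤ ε_k. Let ḡ ∈ ℝ^l have nonnegative coordinates, define u_k ∈ ℝ^l by (u_k)_i := sign((g_k)_i)·ḡ_i and υ_k := ⟨g_k, u_k⟩. On a probability space (Ω, μ), for each k let X_k, Y_k : Ω → ℝ be measurable random variables taking values in {0,1} with E[X_k] = q_k ∈ (0,1] and E[Y_k] = p_k ∈ [0,1], and let Q_k : Ω → ℝ^l be a random vector with E[Q_k] = g_k, E[‖Q_k‖²] < ∞ and E[‖Q_k − g_k‖²] ≤ δ_k²; assume that for each k the random variables X_k, Y_k, Q_k are mutually independent. Define V_k := (X_k/q_k)·(Y_k·Q_k +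 (1 − Y_k)·u_k), ĝ := (1/K)∑_k V_k, and w⁺ := w − η·ĝ, and assume ω ↦ F(w⁺(ω)) is integrable. Then E[F(w⁺)] − F(w) ≤ −(η/2)‖g‖² + (η/2)‖ḡ‖² + (η/K)∑_{k=1}^K (‖g_k‖² + ε_k² − 2υ_k) + (η/(2K))∑_{k=1}^K G_k, where G_k := (−4p_k + p_k² + Lη·p_k/q_k)‖g_k‖² + (−2p_k + p_k² + Lη·(1 − p_k)/q_k)‖ḡ‖² + (6p_k − 2p_k²)·υ_k + Lη·(p_k/q_k)·δ_k². -/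
/-!
By `L`-smoothness, `F(w - η ĝ) ≤ F(w) - η⟪g, ĝ⟫ + (Lη²/2)‖ĝ‖²`, and by convexity of `‖·‖²` the
squared norm of the average `ĝ` is at most the average of the `‖V_k‖²`. Taking expectations, the
independence of `X_k`, `Y_k`, `Q_k` gives `E V_k = p_k g_k + (1 - p_k) u_k` and
`E‖V_k‖² ≤ (p_k/q_k)(‖g_k‖² + δ_k²) + ((1 - p_k)/q_k)‖ḡ‖²`, using `‖u_k‖ = ‖ḡ‖` (no coordinate of
`g_k` vanishes). What is left is a deterministic bound on `-η⟪g, p g_k + (1 - p) u_k⟫`: polarize,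
and split `g - (p g_k + (1 - p) u_k) = (g - g_k) + (1 - p)(g_k - u_k)`.
-/

open MeasureTheory ProbabilityTheory

open scoped RealInnerProductSpace

lemma Real.abs_sign_of_ne_zero {r : ℝ} (hr : r ≠ 0) : |Real.sign r| = 1 := by
  rcases Real.sign_apply_eq_of_ne_zero r hr with h | h <;> simp [h]

lemma EuclideanSpace.norm_eq_of_abs_eq {ι : Type*} [Fintype ι] {x y : EuclideanSpace ℝ ι}
    (h : ∀ i, |x i| = |y i|) : ‖x‖ = ‖y‖ := by
  simp only [EuclideanSpace.norm_eq, Real.norm_eq_abs, h]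

section Norm

variable {E : Type*} [SeminormedAddCommGroup E]

lemma norm_add_sq_le_two_mul (x y : E) : ‖x + y‖ ^ 2 ≤ 2 * ‖x‖ ^ 2 + 2 * ‖y‖ ^ 2 := by
  nlinarith [norm_add_le x y, norm_nonneg (x + y), sq_nonneg (‖x‖ - ‖y‖)]

lemma norm_inv_card_smul_sum_sq_le [NormedSpace ℝ E] {ι : Type*} [Fintype ι] (v : ι → E) :
    ‖(Fintype.card ι : ℝ)⁻¹ • ∑ i, v i‖ ^ 2 ≤ (Fintype.card ι : ℝ)⁻¹ * ∑ i, ‖v i‖ ^ 2 := by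
  rcases (Fintype.card ι).eq_zero_or_pos with h | h
  · simp [h]
  have hsum : ‖∑ i, v i‖ ^ 2 ≤ Fintype.card ι * ∑ i, ‖v i‖ ^ 2 :=
    (pow_le_pow_left₀ (norm_nonneg _) (norm_sum_le _ v) 2).trans sq_sum_le_card_mul_sum_sq
  rw [norm_smul, mul_pow, norm_inv, Real.norm_natCast]
  calc ((Fintype.card ι : ℝ)⁻¹) ^ 2 * ‖∑ i, v i‖ ^ 2
      ≤ ((Fintype.card ι : ℝ)⁻¹) ^ 2 * (Fintype.card ι * ∑ i, ‖v i‖ ^ 2) := by gcongr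
    _ = (Fintype.card ι : ℝ)⁻¹ * ∑ i, ‖v i‖ ^ 2 := by field_simp

end Norm

section Descent

variable {E : Type*} [NormedAddCommGroup E] [InnerProductSpace ℝ E]

lemma le_sub_mul_inner_add_of_smooth {F : E → ℝ} {L : ℝ} {w g : E}
    (hsmooth : ∀ w', F w' ≤ F w + ⟪g, w' - w⟫ + L / 2 * ‖w' - w‖ ^ 2) (η : ℝ) (d : E) :
    F (w - η • d) ≤ F w - η * ⟪g, d⟫ + L * η ^ 2 / 2 * ‖d‖ ^ 2 := by
  have h := hsmooth (w - η • d)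
  rw [sub_sub_cancel_left, inner_neg_right, real_inner_smul_right, norm_neg, norm_smul,
    Real.norm_eq_abs, mul_pow, sq_abs] at h
  linarith

lemma integral_sub_le_of_smooth [CompleteSpace E] {Ω ι : Type*} [MeasurableSpace Ω]
    {μ : Measure Ω} [IsProbabilityMeasure μ] [Fintype ι] {F : E → ℝ} {L : ℝ} (hL : 0 ≤ L)
    {w g : E} (hsmooth : ∀ w', F w' ≤ F w + ⟪g, w' - w⟫ + L / 2 * ‖w' - w‖ ^ 2) (η : ℝ)
    {V : ι → Ω → E} (hV : ∀ i, Integrable (V i) μ)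
    (hV2 : ∀ i, Integrable (fun ω => ‖V i ω‖ ^ 2) μ)
    (hF : Integrable (fun ω => F (w - η • ((Fintype.card ι : ℝ)⁻¹ • ∑ i, V i ω))) μ) :
    ∫ ω, F (w - η • ((Fintype.card ι : ℝ)⁻¹ • ∑ i, V i ω)) ∂μ - F w ≤
      (Fintype.card ι : ℝ)⁻¹ * ∑ i, (-η * ⟪g, ∫ ω, V i ω ∂μ⟫
        + L * η ^ 2 / 2 * ∫ ω, ‖V i ω‖ ^ 2 ∂μ) := by
  set n : ℝ := (Fintype.card ι : ℝ)⁻¹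
  set f : ι → Ω → ℝ := fun i ω => -η * ⟪g, V i ω⟫ + L * η ^ 2 / 2 * ‖V i ω‖ ^ 2
  have hinner : ∀ i, Integrable (fun ω => ⟪g, V i ω⟫) μ := fun i =>
    (innerSL ℝ g).integrable_comp (hV i)
  have hf : ∀ i, Integrable (f i) μ := fun i =>
    ((hinner i).const_mul _).add ((hV2 i).const_mul _)
  have hpointwise : ∀ ω, F (w - η • (n • ∑ i, V i ω)) ≤ F w + n * ∑ i, f i ω := fun ω => by
    have hstep := le_sub_mul_inner_add_of_smooth hsmooth η (n • ∑ i, V i ω)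
    rw [real_inner_smul_right, inner_sum] at hstep
    have hnorm : L * η ^ 2 / 2 * ‖n • ∑ i, V i ω‖ ^ 2 ≤ L * η ^ 2 / 2 * (n * ∑ i, ‖V i ω‖ ^ 2) :=
      mul_le_mul_of_nonneg_left (norm_inv_card_smul_sum_sq_le _) (by positivity)
    have hsum : n * ∑ i, f i ω
        = -η * (n * ∑ i, ⟪g, V i ω⟫) + L * η ^ 2 / 2 * (n * ∑ i, ‖V i ω‖ ^ 2) := by
      simp only [f, Finset.sum_add_distrib, ← Finset.mul_sum]; ring
    linarith
  have hmono := integral_mono (g := fun ω => F w + n * ∑ i, f i ω) hF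
    ((integrable_const (F w)).add ((integrable_finsetSum _ fun i _ => hf i).const_mul n))
    hpointwise
  rw [integral_add (integrable_const _) ((integrable_finsetSum _ fun i _ => hf i).const_mul n),
    integral_const, probReal_univ, one_smul, integral_const_mul,
    integral_finsetSum _ fun i _ => hf i] at hmono
  have hfi : ∀ i, ∫ ω, f i ω ∂μ = -η * ⟪g, ∫ ω, V i ω ∂μ⟫ + L * η ^ 2 / 2 * ∫ ω, ‖V i ω‖ ^ 2 ∂μ :=
    fun i => by
      simp only [f]
      rw [integral_add ((hinner i).const_mul _) ((hV2 i).const_mul _),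
        integral_const_mul, integral_const_mul, integral_inner (hV i)]
  simp only [hfi] at hmono
  linarith

lemma neg_mul_inner_smul_add_one_sub_smul_le {η p e : ℝ} (hη : 0 ≤ η) {g a b : E}
    (hag : ‖a - g‖ ≤ e) :
    -η * ⟪g, p • a + (1 - p) • b⟫ ≤
      -(η / 2) * ‖g‖ ^ 2 + η / 2 * ‖b‖ ^ 2 + η * (‖a‖ ^ 2 + e ^ 2 - 2 * ⟪a, b⟫)
        + η / 2 * ((-4 * p + p ^ 2) * ‖a‖ ^ 2 + (-2 * p + p ^ 2) * ‖b‖ ^ 2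
          + (6 * p - 2 * p ^ 2) * ⟪a, b⟫) := by
  set m := p • a + (1 - p) • b
  have hm : ‖m‖ ^ 2 = p ^ 2 * ‖a‖ ^ 2 + 2 * p * (1 - p) * ⟪a, b⟫ + (1 - p) ^ 2 * ‖b‖ ^ 2 := by
    rw [norm_add_sq_real, norm_smul, norm_smul, real_inner_smul_left, real_inner_smul_right,
      mul_pow, mul_pow, Real.norm_eq_abs, Real.norm_eq_abs, sq_abs, sq_abs]
    ring
  have hgm : ‖g - m‖ ^ 2 ≤ 2 * e ^ 2 + 2 * (1 - p) ^ 2 * (‖a‖ ^ 2 + ‖b‖ ^ 2 - 2 * ⟪a, b⟫) := by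
    have hsplit : g - m = (g - a) + (1 - p) • (a - b) := by simp only [m]; module
    have hab : ‖(1 - p) • (a - b)‖ ^ 2 = (1 - p) ^ 2 * (‖a‖ ^ 2 + ‖b‖ ^ 2 - 2 * ⟪a, b⟫) := by
      rw [norm_smul, mul_pow, Real.norm_eq_abs, sq_abs, norm_sub_sq_real]
      ring
    have he : ‖g - a‖ ^ 2 ≤ e ^ 2 := norm_sub_rev a g ▸ pow_le_pow_left₀ (norm_nonneg _) hag 2
    rw [hsplit]
    linarith [norm_add_sq_le_two_mul (g - a) ((1 - p) • (a - b))]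
  have hpolar : ⟪g, m⟫ = (‖g‖ ^ 2 + ‖m‖ ^ 2 - ‖g - m‖ ^ 2) / 2 := by
    rw [norm_sub_sq_real]; ring
  rw [hpolar, hm]
  nlinarith [mul_le_mul_of_nonneg_left hgm hη]

end Descent

section PacketEstimate

variable {Ω E : Type*} [MeasurableSpace Ω] {μ : Measure Ω}
  [NormedAddCommGroup E] [InnerProductSpace ℝ E]

/-- The server's estimate of one device's gradient: `x` and `y` indicate reception of the sign
and of the modulus packet, `q` is the reception probability of the sign packet, `v` the quantized
gradient and `u` the sign-modulated compensatory vector. -/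
noncomputable def packetEstimate (q x y : ℝ) (v u : E) : E := (x / q) • (y • v + (1 - y) • u)

lemma packetEstimate_eq (q x y : ℝ) (v u : E) :
    packetEstimate q x y v u = q⁻¹ • ((x * y) • v + (x * (1 - y)) • u) := by
  unfold packetEstimate
  module

lemma norm_packetEstimate_sq {q x y : ℝ} (hx : x = 0 ∨ x = 1) (hy : y = 0 ∨ y = 1) (v u : E) :
    ‖packetEstimate q x y v u‖ ^ 2 = q⁻¹ ^ 2 * (x * y * ‖v‖ ^ 2 + x * (1 - y) * ‖u‖ ^ 2) := by
  unfold packetEstimate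
  rcases hx with rfl | rfl <;> rcases hy with rfl | rfl <;> simp [norm_smul, mul_pow]

lemma mul_eq_zero_or_one {x y : ℝ} (hx : x = 0 ∨ x = 1) (hy : y = 0 ∨ y = 1) :
    x * y = 0 ∨ x * y = 1 := by
  rcases hx with rfl | rfl <;> simp [hy]

lemma mul_one_sub_eq_zero_or_one {x y : ℝ} (hx : x = 0 ∨ x = 1) (hy : y = 0 ∨ y = 1) :
    x * (1 - y) = 0 ∨ x * (1 - y) = 1 :=
  mul_eq_zero_or_one hx (by rcases hy with rfl | rfl <;> norm_num)

lemma MeasureTheory.Integrable.smul_of_zero_one {Z : Ω → ℝ} {f : Ω → E} (hZ : Measurable Z)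
    (hZ01 : ∀ ω, Z ω = 0 ∨ Z ω = 1) (hf : Integrable f μ) :
    Integrable (fun ω => Z ω • f ω) μ :=
  hf.mono (hZ.aestronglyMeasurable.smul hf.1) (ae_of_all _ fun ω => by
    rcases hZ01 ω with h | h <;> simp [h])

lemma integrable_mul_smul_of_zero_one {X Y : Ω → ℝ} {Q : Ω → E}
    (hXm : Measurable X) (hYm : Measurable Y)
    (hX01 : ∀ ω, X ω = 0 ∨ X ω = 1) (hY01 : ∀ ω, Y ω = 0 ∨ Y ω = 1) (hQ : Integrable Q μ) :
    Integrable (fun ω => (X ω * Y ω) • Q ω) μ :=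
  hQ.smul_of_zero_one (hXm.mul hYm) fun ω => mul_eq_zero_or_one (hX01 ω) (hY01 ω)

variable [IsProbabilityMeasure μ]

lemma integrable_of_zero_one {Z : Ω → ℝ} (hZ : Measurable Z) (hZ01 : ∀ ω, Z ω = 0 ∨ Z ω = 1) :
    Integrable Z μ := by
  simpa using (integrable_const (1 : ℝ)).smul_of_zero_one hZ hZ01

lemma integrable_mul_one_sub_of_zero_one {X Y : Ω → ℝ}
    (hXm : Measurable X) (hYm : Measurable Y)
    (hX01 : ∀ ω, X ω = 0 ∨ X ω = 1) (hY01 : ∀ ω, Y ω = 0 ∨ Y ω = 1) :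
    Integrable (fun ω => X ω * (1 - Y ω)) μ :=
  integrable_of_zero_one (hXm.mul (measurable_const.sub hYm))
    fun ω => mul_one_sub_eq_zero_or_one (hX01 ω) (hY01 ω)

lemma ProbabilityTheory.IndepFun.integral_mul_one_sub {X Y : Ω → ℝ} (hXY : IndepFun X Y μ)
    (hX : Measurable X) (hY : Integrable Y μ) :
    ∫ ω, X ω * (1 - Y ω) ∂μ = (∫ ω, X ω ∂μ) * (1 - ∫ ω, Y ω ∂μ) := by
  have hind : IndepFun X (fun ω => 1 - Y ω) μ :=
    hXY.comp measurable_id (measurable_const.sub measurable_id)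
  rw [hind.integral_fun_mul_eq_mul_integral hX.aestronglyMeasurable
    (aestronglyMeasurable_const.sub hY.1), integral_sub (integrable_const 1) hY]
  simp

lemma integral_norm_sub_integral_sq [CompleteSpace E] {Q : Ω → E} (hQ : Integrable Q μ)
    (hQ2 : Integrable (fun ω => ‖Q ω‖ ^ 2) μ) :
    ∫ ω, ‖Q ω - ∫ ω, Q ω ∂μ‖ ^ 2 ∂μ = ∫ ω, ‖Q ω‖ ^ 2 ∂μ - ‖∫ ω, Q ω ∂μ‖ ^ 2 := by
  set m := ∫ ω, Q ω ∂μ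
  have hinner : Integrable (fun ω => 2 * ⟪m, Q ω⟫) μ :=
    ((innerSL ℝ m).integrable_comp hQ).const_mul 2
  have hexpand : ∀ ω, ‖Q ω - m‖ ^ 2 = ‖Q ω‖ ^ 2 - 2 * ⟪m, Q ω⟫ + ‖m‖ ^ 2 := fun ω => by
    rw [norm_sub_sq_real, real_inner_comm]
  simp only [hexpand]
  rw [integral_add (f := fun ω => ‖Q ω‖ ^ 2 - 2 * ⟪m, Q ω⟫) (hQ2.sub hinner) (integrable_const _),
    integral_sub hQ2 hinner, integral_const_mul, integral_inner hQ, real_inner_self_eq_norm_sq,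
    integral_const, probReal_univ, one_smul]
  ring

lemma integrable_packetEstimate {X Y : Ω → ℝ} {Q : Ω → E} (q : ℝ) (u : E)
    (hXm : Measurable X) (hYm : Measurable Y)
    (hX01 : ∀ ω, X ω = 0 ∨ X ω = 1) (hY01 : ∀ ω, Y ω = 0 ∨ Y ω = 1) (hQ : Integrable Q μ) :
    Integrable (fun ω => packetEstimate q (X ω) (Y ω) (Q ω) u) μ := by
  simp_rw [packetEstimate_eq]
  exact ((integrable_mul_smul_of_zero_one hXm hYm hX01 hY01 hQ).add
    ((integrable_mul_one_sub_of_zero_one hXm hYm hX01 hY01).smul_const u)).smul _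

lemma integrable_norm_packetEstimate_sq {X Y : Ω → ℝ} {Q : Ω → E} (q : ℝ) (u : E)
    (hXm : Measurable X) (hYm : Measurable Y)
    (hX01 : ∀ ω, X ω = 0 ∨ X ω = 1) (hY01 : ∀ ω, Y ω = 0 ∨ Y ω = 1)
    (hQ2 : Integrable (fun ω => ‖Q ω‖ ^ 2) μ) :
    Integrable (fun ω => ‖packetEstimate q (X ω) (Y ω) (Q ω) u‖ ^ 2) μ := by
  simp_rw [norm_packetEstimate_sq (hX01 _) (hY01 _)]
  exact ((integrable_mul_smul_of_zero_one hXm hYm hX01 hY01 hQ2).add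
    ((integrable_mul_one_sub_of_zero_one hXm hYm hX01 hY01).mul_const _)).const_mul _

variable [CompleteSpace E] [MeasurableSpace E] [BorelSpace E]

lemma integral_packetEstimate {X Y : Ω → ℝ} {Q : Ω → E} {q p : ℝ} (u : E)
    (hXm : Measurable X) (hYm : Measurable Y)
    (hX01 : ∀ ω, X ω = 0 ∨ X ω = 1) (hY01 : ∀ ω, Y ω = 0 ∨ Y ω = 1)
    (hXY : IndepFun X Y μ) (hXYQ : IndepFun (fun ω => (X ω, Y ω)) Q μ) (hQ : Integrable Q μ)
    (hX : ∫ ω, X ω ∂μ = q) (hY : ∫ ω, Y ω ∂μ = p) (hq : q ≠ 0) :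
    ∫ ω, packetEstimate q (X ω) (Y ω) (Q ω) u ∂μ = p • ∫ ω, Q ω ∂μ + (1 - p) • u := by
  have hind : IndepFun (fun ω => X ω * Y ω) Q μ :=
    hXYQ.comp (measurable_fst.mul measurable_snd) measurable_id
  simp_rw [packetEstimate_eq]
  rw [integral_smul, integral_add (integrable_mul_smul_of_zero_one hXm hYm hX01 hY01 hQ)
    ((integrable_mul_one_sub_of_zero_one hXm hYm hX01 hY01).smul_const u),
    hind.integral_fun_smul_eq_smul_integral (hXm.mul hYm).aestronglyMeasurable hQ.1,
    hXY.integral_fun_mul_eq_mul_integral hXm.aestronglyMeasurable hYm.aestronglyMeasurable,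
    integral_smul_const, hXY.integral_mul_one_sub hXm (integrable_of_zero_one hYm hY01), hX, hY]
  match_scalars <;> field_simp

lemma integral_norm_packetEstimate_sq_le {X Y : Ω → ℝ} {Q : Ω → E} {q p d : ℝ} {m : E} (u : E)
    (hXm : Measurable X) (hYm : Measurable Y)
    (hX01 : ∀ ω, X ω = 0 ∨ X ω = 1) (hY01 : ∀ ω, Y ω = 0 ∨ Y ω = 1)
    (hXY : IndepFun X Y μ) (hXYQ : IndepFun (fun ω => (X ω, Y ω)) Q μ) (hQ : Integrable Q μ)
    (hQ2 : Integrable (fun ω => ‖Q ω‖ ^ 2) μ) (hX : ∫ ω, X ω ∂μ = q) (hY : ∫ ω, Y ω ∂μ = p)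
    (hq : 0 < q) (hp : 0 ≤ p) (hQm : ∫ ω, Q ω ∂μ = m) (hQerr : ∫ ω, ‖Q ω - m‖ ^ 2 ∂μ ≤ d) :
    ∫ ω, ‖packetEstimate q (X ω) (Y ω) (Q ω) u‖ ^ 2 ∂μ
      ≤ p / q * (‖m‖ ^ 2 + d) + (1 - p) / q * ‖u‖ ^ 2 := by
  have hind : IndepFun (fun ω => X ω * Y ω) (fun ω => ‖Q ω‖ ^ 2) μ :=
    hXYQ.comp (measurable_fst.mul measurable_snd) (measurable_norm.pow_const 2)
  have hQ2m : ∫ ω, ‖Q ω‖ ^ 2 ∂μ ≤ ‖m‖ ^ 2 + d := by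
    rw [← hQm] at hQerr ⊢
    linarith [integral_norm_sub_integral_sq hQ hQ2]
  simp_rw [norm_packetEstimate_sq (hX01 _) (hY01 _)]
  rw [integral_const_mul, integral_add (f := fun ω => X ω * Y ω * ‖Q ω‖ ^ 2)
    (integrable_mul_smul_of_zero_one hXm hYm hX01 hY01 hQ2)
    ((integrable_mul_one_sub_of_zero_one hXm hYm hX01 hY01).mul_const _),
    hind.integral_fun_mul_eq_mul_integral (hXm.mul hYm).aestronglyMeasurable hQ2.1,
    hXY.integral_fun_mul_eq_mul_integral hXm.aestronglyMeasurable hYm.aestronglyMeasurable,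
    integral_mul_const, hXY.integral_mul_one_sub hXm (integrable_of_zero_one hYm hY01), hX, hY]
  have hpq : 0 ≤ p / q := div_nonneg hp hq.le
  calc q⁻¹ ^ 2 * (q * p * ∫ ω, ‖Q ω‖ ^ 2 ∂μ + q * (1 - p) * ‖u‖ ^ 2)
      = p / q * ∫ ω, ‖Q ω‖ ^ 2 ∂μ + (1 - p) / q * ‖u‖ ^ 2 := by field_simp
    _ ≤ p / q * (‖m‖ ^ 2 + d) + (1 - p) / q * ‖u‖ ^ 2 := by gcongr

lemma neg_mul_inner_integral_packetEstimate_add_le {X Y : Ω → ℝ} {Q : Ω → E} {q p d e L η : ℝ}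
    {g v : E} (u : E) (hXm : Measurable X) (hYm : Measurable Y)
    (hX01 : ∀ ω, X ω = 0 ∨ X ω = 1) (hY01 : ∀ ω, Y ω = 0 ∨ Y ω = 1)
    (hXY : IndepFun X Y μ) (hXYQ : IndepFun (fun ω => (X ω, Y ω)) Q μ) (hQ : Integrable Q μ)
    (hQ2 : Integrable (fun ω => ‖Q ω‖ ^ 2) μ) (hX : ∫ ω, X ω ∂μ = q) (hY : ∫ ω, Y ω ∂μ = p)
    (hq : 0 < q) (hp : 0 ≤ p) (hQm : ∫ ω, Q ω ∂μ = v) (hQerr : ∫ ω, ‖Q ω - v‖ ^ 2 ∂μ ≤ d)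
    (hL : 0 ≤ L) (hη : 0 ≤ η) (hvg : ‖v - g‖ ≤ e) :
    -η * ⟪g, ∫ ω, packetEstimate q (X ω) (Y ω) (Q ω) u ∂μ⟫
        + L * η ^ 2 / 2 * ∫ ω, ‖packetEstimate q (X ω) (Y ω) (Q ω) u‖ ^ 2 ∂μ ≤
      -(η / 2) * ‖g‖ ^ 2 + η / 2 * ‖u‖ ^ 2 + η * (‖v‖ ^ 2 + e ^ 2 - 2 * ⟪v, u⟫)
        + η / 2 * ((-4 * p + p ^ 2 + L * η * p / q) * ‖v‖ ^ 2
          + (-2 * p + p ^ 2 + L * η * (1 - p) / q) * ‖u‖ ^ 2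
          + (6 * p - 2 * p ^ 2) * ⟪v, u⟫ + L * η * (p / q) * d) := by
  rw [integral_packetEstimate u hXm hYm hX01 hY01 hXY hXYQ hQ hX hY hq.ne', hQm]
  have hsecond := mul_le_mul_of_nonneg_left (integral_norm_packetEstimate_sq_le u hXm hYm hX01
    hY01 hXY hXYQ hQ hQ2 hX hY hq hp hQm hQerr) (by positivity : 0 ≤ L * η ^ 2 / 2)
  refine (add_le_add (neg_mul_inner_smul_add_one_sub_smul_le hη hvg) hsecond).trans_eq ?_
  ring

end PacketEstimate

theorem sp_fl_one_step_bound_general (l K : ℕ) (hK : 1 ≤ K)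
    (L η : ℝ) (hL : 0 < L) (hη : 0 < η)
    (F : EuclideanSpace ℝ (Fin l) → ℝ)
    (gradF : EuclideanSpace ℝ (Fin l) → EuclideanSpace ℝ (Fin l))
    (hsmooth : ∀ w w' : EuclideanSpace ℝ (Fin l),
      F w' ≤ F w + (inner ℝ (gradF w) (w' - w) : ℝ) + L / 2 * ‖w' - w‖ ^ 2)
    (w : EuclideanSpace ℝ (Fin l)) (g : EuclideanSpace ℝ (Fin l)) (hg : g = gradF w)
    (gloc : Fin K → EuclideanSpace ℝ (Fin l))
    (hgnz : ∀ k i, gloc k i ≠ 0)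
    (ε : Fin K → ℝ) (hdev : ∀ k, ‖gloc k - g‖ ≤ ε k)
    (gbar : EuclideanSpace ℝ (Fin l))
    (u : Fin K → EuclideanSpace ℝ (Fin l))
    (hu : ∀ k i, u k i = Real.sign (gloc k i) * gbar i)
    (υ : Fin K → ℝ) (hυ : ∀ k, υ k = (inner ℝ (gloc k) (u k) : ℝ))
    {Ω : Type*} [MeasurableSpace Ω] (μ : Measure Ω) [IsProbabilityMeasure μ]
    (X Y : Fin K → Ω → ℝ)
    (hXm : ∀ k, Measurable (X k)) (hYm : ∀ k, Measurable (Y k))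
    (hX01 : ∀ k ω, X k ω = 0 ∨ X k ω = 1) (hY01 : ∀ k ω, Y k ω = 0 ∨ Y k ω = 1)
    (q p : Fin K → ℝ)
    (hq : ∀ k, q k ∈ Set.Ioc (0 : ℝ) 1) (hp : ∀ k, p k ∈ Set.Icc (0 : ℝ) 1)
    (hXmean : ∀ k, ∫ ω, X k ω ∂μ = q k) (hYmean : ∀ k, ∫ ω, Y k ω ∂μ = p k)
    (Q : Fin K → Ω → EuclideanSpace ℝ (Fin l))
    (hQint : ∀ k, Integrable (Q k) μ)
    (hQmean : ∀ k, ∫ ω, Q k ω ∂μ = gloc k)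
    (hQsq : ∀ k, Integrable (fun ω => ‖Q k ω‖ ^ 2) μ)
    (δ : Fin K → ℝ) (hQerr : ∀ k, ∫ ω, ‖Q k ω - gloc k‖ ^ 2 ∂μ ≤ δ k ^ 2)
    (hindXY : ∀ k, IndepFun (X k) (Y k) μ)
    (hindXYQ : ∀ k, IndepFun (fun ω => (X k ω, Y k ω)) (Q k) μ)
    (V : Fin K → Ω → EuclideanSpace ℝ (Fin l))
    (hV : ∀ k ω, V k ω = (X k ω / q k) • (Y k ω • Q k ω + (1 - Y k ω) • u k))
    (ghat : Ω → EuclideanSpace ℝ (Fin l))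
    (hghat : ∀ ω, ghat ω = ((K : ℝ))⁻¹ • ∑ k, V k ω)
    (wplus : Ω → EuclideanSpace ℝ (Fin l))
    (hwplus : ∀ ω, wplus ω = w - η • ghat ω)
    (hFint : Integrable (fun ω => F (wplus ω)) μ) :
    (∫ ω, F (wplus ω) ∂μ) - F w ≤
      -(η / 2) * ‖g‖ ^ 2 + (η / 2) * ‖gbar‖ ^ 2
        + η / K * ∑ k, (‖gloc k‖ ^ 2 + ε k ^ 2 - 2 * υ k)
        + η / (2 * K) * ∑ k,
            ((-4 * p k + p k ^ 2 + L * η * p k / q k) * ‖gloc k‖ ^ 2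
              + (-2 * p k + p k ^ 2 + L * η * (1 - p k) / q k) * ‖gbar‖ ^ 2
              + (6 * p k - 2 * p k ^ 2) * υ k
              + L * η * (p k / q k) * δ k ^ 2) := by
  have hub : ∀ k, ‖u k‖ = ‖gbar‖ := fun k => EuclideanSpace.norm_eq_of_abs_eq fun i => by
    rw [hu, abs_mul, Real.abs_sign_of_ne_zero (hgnz k i), one_mul]
  have hK0 : (K : ℝ) ≠ 0 := Nat.cast_ne_zero.2 (by omega)
  obtain rfl : V = fun k ω => packetEstimate (q k) (X k ω) (Y k ω) (Q k ω) (u k) :=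
    funext fun k => funext (hV k)
  obtain rfl := funext hwplus
  obtain rfl := funext hghat
  have hdescent := integral_sub_le_of_smooth hL.le (hsmooth w) η
    (fun k => integrable_packetEstimate (q k) (u k) (hXm k) (hYm k) (hX01 k) (hY01 k) (hQint k))
    (fun k => integrable_norm_packetEstimate_sq (q k) (u k) (hXm k) (hYm k) (hX01 k) (hY01 k)
      (hQsq k))
    (by simpa only [Fintype.card_fin] using hFint)
  rw [Fintype.card_fin, ← hg] at hdescent
  refine hdescent.trans ((mul_le_mul_of_nonneg_left (Finset.sum_le_sum fun k _ =>
    neg_mul_inner_integral_packetEstimate_add_le (u k) (hXm k) (hYm k) (hX01 k) (hY01 k)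
      (hindXY k) (hindXYQ k) (hQint k) (hQsq k) (hXmean k) (hYmean k) (hq k).1 (hp k).1
      (hQmean k) (hQerr k) hL.le hη.le (hdev k)) (by positivity)).trans_eq ?_)
  simp only [hub, ← hυ, Finset.sum_add_distrib, ← Finset.mul_sum, Finset.sum_const,
    Finset.card_univ, Fintype.card_fin, nsmul_eq_mul]
  field_simp

/-- Theorem 1 of the paper: one-step convergence bound of SP-FL. Each device `k` holds a
local gradient `gloc k` of the `L`-smooth loss `F` at `w` (averaging to `g = ∇F(w)`),
quantized unbiasedly to `Q k` with expected squared error at most `δ k ^ 2`. The sign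
packet is received with probability `q k` (indicator `X k`), the modulus packet with
probability `p k` (indicator `Y k`); on modulus loss the sign-modulated compensatory
vector `u k = s(gloc k) ⊙ gbar` is used. Mutual independence of `X k, Y k, Q k` is
formalized as `X k ⊥ Y k` together with `(X k, Y k) ⊥ Q k`. -/
theorem sp_fl_one_step_bound (l K : ℕ) (hl : 1 ≤ l) (hK : 1 ≤ K)
    (L η : ℝ) (hL : 0 < L) (hη : 0 < η)
    (F : EuclideanSpace ℝ (Fin l) → ℝ)
    (gradF : EuclideanSpace ℝ (Fin l) → EuclideanSpace ℝ (Fin l))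
    (hsmooth : ∀ w w' : EuclideanSpace ℝ (Fin l),
      F w' ≤ F w + (inner ℝ (gradF w) (w' - w) : ℝ) + L / 2 * ‖w' - w‖ ^ 2)
    (w : EuclideanSpace ℝ (Fin l)) (g : EuclideanSpace ℝ (Fin l)) (hg : g = gradF w)
    (gloc : Fin K → EuclideanSpace ℝ (Fin l))
    (hgavg : ((K : ℝ))⁻¹ • ∑ k, gloc k = g)
    (hgnz : ∀ k i, gloc k i ≠ 0)
    (ε : Fin K → ℝ) (hdev : ∀ k, ‖gloc k - g‖ ≤ ε k)
    (gbar : EuclideanSpace ℝ (Fin l)) (hgbar : ∀ i, 0 ≤ gbar i)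
    (u : Fin K → EuclideanSpace ℝ (Fin l))
    (hu : ∀ k i, u k i = Real.sign (gloc k i) * gbar i)
    (υ : Fin K → ℝ) (hυ : ∀ k, υ k = (inner ℝ (gloc k) (u k) : ℝ))
    {Ω : Type*} [MeasurableSpace Ω] (μ : Measure Ω) [IsProbabilityMeasure μ]
    (X Y : Fin K → Ω → ℝ)
    (hXm : ∀ k, Measurable (X k)) (hYm : ∀ k, Measurable (Y k))
    (hX01 : ∀ k ω, X k ω = 0 ∨ X k ω = 1) (hY01 : ∀ k ω, Y k ω = 0 ∨ Y k ω = 1)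
    (q p : Fin K → ℝ)
    (hq : ∀ k, q k ∈ Set.Ioc (0 : ℝ) 1) (hp : ∀ k, p k ∈ Set.Icc (0 : ℝ) 1)
    (hXmean : ∀ k, ∫ ω, X k ω ∂μ = q k) (hYmean : ∀ k, ∫ ω, Y k ω ∂μ = p k)
    (Q : Fin K → Ω → EuclideanSpace ℝ (Fin l))
    (hQint : ∀ k, Integrable (Q k) μ)
    (hQmean : ∀ k, ∫ ω, Q k ω ∂μ = gloc k)
    (hQsq : ∀ k, Integrable (fun ω => ‖Q k ω‖ ^ 2) μ)
    (δ : Fin K → ℝ) (hQerr : ∀ k, ∫ ω, ‖Q k ω - gloc k‖ ^ 2 ∂μ ≤ δ k ^ 2)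
    (hindXY : ∀ k, IndepFun (X k) (Y k) μ)
    (hindXYQ : ∀ k, IndepFun (fun ω => (X k ω, Y k ω)) (Q k) μ)
    (V : Fin K → Ω → EuclideanSpace ℝ (Fin l))
    (hV : ∀ k ω, V k ω = (X k ω / q k) • (Y k ω • Q k ω + (1 - Y k ω) • u k))
    (ghat : Ω → EuclideanSpace ℝ (Fin l))
    (hghat : ∀ ω, ghat ω = ((K : ℝ))⁻¹ • ∑ k, V k ω)
    (wplus : Ω → EuclideanSpace ℝ (Fin l))
    (hwplus : ∀ ω, wplus ω = w - η • ghat ω)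
    (hFint : Integrable (fun ω => F (wplus ω)) μ) :
    (∫ ω, F (wplus ω) ∂μ) - F w ≤
      -(η / 2) * ‖g‖ ^ 2 + (η / 2) * ‖gbar‖ ^ 2
        + η / K * ∑ k, (‖gloc k‖ ^ 2 + ε k ^ 2 - 2 * υ k)
        + η / (2 * K) * ∑ k,
            ((-4 * p k + p k ^ 2 + L * η * p k / q k) * ‖gloc k‖ ^ 2
              + (-2 * p k + p k ^ 2 + L * η * (1 - p k) / q k) * ‖gbar‖ ^ 2
              + (6 * p k - 2 * p k ^ 2) * υ k
              + L * η * (p k / q k) * δ k ^ 2) :=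
  sp_fl_one_step_bound_general l K hK L η hL hη F gradF hsmooth w g hg gloc hgnz ε hdev gbar u hu υ
    hυ μ X Y hXm hYm hX01 hY01 q p hq hp hXmean hYmean Q hQint hQmean hQsq δ hQerr hindXY hindXYQ V
    hV ghat hghat wplus hwplus hFint
end

section
/- Let H_s < 0, H_v < 0, and A, B, C, D be real numbers with D > 0 and C + D ≥ 0. Define G' : (0,1) → ℝ by G'(α) = A·exp(H_v/(1−α))·H_v/(1−α)² + B·exp(2H_v/(1−α))·2H_v/(1−α)² + C·exp(H_v/(1−α) − H_s/α)·(H_v/(1−α)² + H_s/α²) + D·exp(−H_s/α)·H_s/α². Then G'(α) tends to −∞ as α tends to 0 from the right (Tendsto G' (nhdsWithin 0 (Set.Ioi 0)) atBot); in particular, G'(α) < 0 for all α in some right-neighborhood of 0. -/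
open Filter Topology Real

/-! Near `α = 0⁺` the two terms containing `exp (-Hs / α)` share the factor
`exp (-Hs / α) / α ^ 2`, which tends to `+∞` since `-Hs > 0`. What multiplies it tends to
`Hs * (C * exp Hv + D)`, which is negative because `C * exp Hv + D` is a convex combination
of `C + D ≥ 0` and `D > 0` with weights `exp Hv` and `1 - exp Hv`. The remaining two terms
stay bounded, so `G'` tends to `-∞`. -/

theorem tendsto_exp_div_div_pow_nhdsGT_zero {c : ℝ} (hc : 0 < c) (n : ℕ) :
    Tendsto (fun α : ℝ => exp (c / α) / α ^ n) (𝓝[>] 0) atTop := by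
  have h : Tendsto (fun t : ℝ => exp (c * t) * t ^ n) atTop atTop := by
    refine tendsto_atTop_mono' atTop ?_ (tendsto_exp_atTop.comp (tendsto_id.const_mul_atTop hc))
    filter_upwards [eventually_ge_atTop 1] with t ht
    exact le_mul_of_one_le_right (exp_pos _).le (one_le_pow₀ ht)
  refine (h.comp tendsto_inv_nhdsGT_zero).congr fun α => ?_
  simp [div_eq_mul_inv, inv_pow]

theorem mul_add_pos_of_lt_one {C D t : ℝ} (ht₀ : 0 ≤ t) (ht₁ : t < 1) (hD : 0 < D)
    (hCD : 0 ≤ C + D) : 0 < C * t + D := by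
  nlinarith

theorem exp_sign_terms_eq_mul {Hs Hv C D α : ℝ} (hα : α ≠ 0) (hα₁ : 1 - α ≠ 0) :
    C * exp (Hv / (1 - α) - Hs / α) * (Hv / (1 - α) ^ 2 + Hs / α ^ 2)
        + D * exp (-Hs / α) * (Hs / α ^ 2)
      = exp (-Hs / α) / α ^ 2
          * (C * exp (Hv / (1 - α)) * (Hv * α ^ 2 / (1 - α) ^ 2 + Hs) + D * Hs) := by
  rw [sub_eq_add_neg, ← neg_div, exp_add]
  field_simp

/-- Proof of Lemma 3: for `H_s < 0`, `H_v < 0`, `D > 0` and `C + D ≥ 0`, the derivative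
`G'(α)` of the power-allocation objective tends to `−∞` as `α → 0⁺`; in particular it
is negative on a right-neighborhood of `0`. -/
theorem power_objective_deriv_tendsto_atBot
    (Hs Hv A B C D : ℝ) (hHs : Hs < 0) (hHv : Hv < 0) (hD : 0 < D) (hCD : 0 ≤ C + D) :
    Tendsto (fun α : ℝ =>
        A * Real.exp (Hv / (1 - α)) * (Hv / (1 - α) ^ 2)
          + B * Real.exp (2 * Hv / (1 - α)) * (2 * Hv / (1 - α) ^ 2)
          + C * Real.exp (Hv / (1 - α) - Hs / α) * (Hv / (1 - α) ^ 2 + Hs / α ^ 2)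
          + D * Real.exp (-Hs / α) * (Hs / α ^ 2))
        (nhdsWithin 0 (Set.Ioi 0)) atBot ∧
      ∀ᶠ α in nhdsWithin (0 : ℝ) (Set.Ioi 0),
        A * Real.exp (Hv / (1 - α)) * (Hv / (1 - α) ^ 2)
          + B * Real.exp (2 * Hv / (1 - α)) * (2 * Hv / (1 - α) ^ 2)
          + C * Real.exp (Hv / (1 - α) - Hs / α) * (Hv / (1 - α) ^ 2 + Hs / α ^ 2)
          + D * Real.exp (-Hs / α) * (Hs / α ^ 2) < 0 := by
  have hbounded := (show ContinuousAt (fun α : ℝ => A * exp (Hv / (1 - α)) * (Hv / (1 - α) ^ 2)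
      + B * exp (2 * Hv / (1 - α)) * (2 * Hv / (1 - α) ^ 2)) 0 by
    fun_prop (disch := norm_num)).tendsto.mono_left (nhdsWithin_le_nhds (s := Set.Ioi 0))
  have hfactor := (show ContinuousAt (fun α : ℝ =>
      C * exp (Hv / (1 - α)) * (Hv * α ^ 2 / (1 - α) ^ 2 + Hs) + D * Hs) 0 by
    fun_prop (disch := norm_num)).tendsto.mono_left (nhdsWithin_le_nhds (s := Set.Ioi 0))
  have hlimit_neg : C * exp (Hv / (1 - 0)) * (Hv * 0 ^ 2 / (1 - 0) ^ 2 + Hs) + D * Hs < 0 := by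
    have := mul_add_pos_of_lt_one (exp_pos Hv).le (exp_lt_one_iff.mpr hHv) hD hCD
    simp only [sub_zero, div_one]
    nlinarith
  have hblowup := tendsto_exp_div_div_pow_nhdsGT_zero (neg_pos.mpr hHs) 2
  refine (fun h => ⟨h, h.eventually (eventually_lt_atBot 0)⟩) ?_
  refine (hbounded.add_atBot (hblowup.atTop_mul_neg hlimit_neg hfactor)).congr' ?_
  filter_upwards [Ioo_mem_nhdsGT (zero_lt_one' ℝ)] with α ⟨hα₀, hα₁⟩
  simp only [add_assoc, exp_sign_terms_eq_mul hα₀.ne' (sub_ne_zero.mpr hα₁.ne')]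
end

section
/- For all positive real numbers c and k, the function β ↦ c·β·(1 − 2^{k/β}) is concave on the open interval (0, ∞) (ConcaveOn ℝ (Set.Ioi 0)). -/
/-!
The map `x ↦ x * h (a / x)` is a perspective of `h`, hence convex on `(0, ∞)` when `h` is
convex: `a / (s x + t y)` is the convex combination of `a / x` and `a / y` with weights
`s x / (s x + t y)` and `t y / (s x + t y)`, and multiplying Jensen's inequality for `h` at these
points by `s x + t y` gives convexity. With `h u = 2 ^ u` and `a = k` this makes `β * 2 ^ (k / β)`
convex, so `c β (1 - 2 ^ (k / β)) = c (β - β * 2 ^ (k / β))` is concave for `c ≥ 0`.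
-/

open Set

theorem ConvexOn.mul_comp_const_div {h : ℝ → ℝ} (hh : ConvexOn ℝ univ h) (a : ℝ) :
    ConvexOn ℝ (Ioi 0) fun x => x * h (a / x) := by
  refine ⟨convex_Ioi 0, fun x hx y hy s t hs ht hst => ?_⟩
  simp only [mem_Ioi, smul_eq_mul] at *
  set m := s * x + t * y
  have hm : 0 < m := by
    rcases hs.eq_or_lt with rfl | hs
    · obtain rfl : t = 1 := by linarith
      simpa [m] using hy
    · positivity
  have hmid : (s * x / m) * (a / x) + (t * y / m) * (a / y) = a / m := by
    field_simp
    linear_combination a * hst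
  have key := hh.2 (mem_univ (a / x)) (mem_univ (a / y)) (by positivity : 0 ≤ s * x / m)
    (by positivity : 0 ≤ t * y / m) (by field_simp; rfl)
  simp only [smul_eq_mul, hmid] at key
  calc m * h (a / m) ≤ m * (s * x / m * h (a / x) + t * y / m * h (a / y)) := by gcongr
    _ = s * (x * h (a / x)) + t * (y * h (a / y)) := by field_simp

theorem H_concaveOn_general (c k : ℝ) (hc : 0 < c) :
    ConcaveOn ℝ (Set.Ioi 0) (fun β : ℝ => c * β * (1 - (2 : ℝ) ^ (k / β))) := by
  have hconvex := (convexOn_rpow_left two_pos).mul_comp_const_div k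
  refine ((concaveOn_id (convex_Ioi 0)).sub hconvex |>.smul hc.le).congr fun β _ => ?_
  simp only [Pi.sub_apply, id, smul_eq_mul]
  ring

/-- For positive constants `c` and `k`, the function `β ↦ c·β·(1 − 2^{k/β})` is concave
on `(0, ∞)`; this is the concavity of `H_v` (and `H_s`) exploited by the SCA method. -/
theorem H_concaveOn (c k : ℝ) (hc : 0 < c) (hk : 0 < k) :
    ConcaveOn ℝ (Set.Ioi 0) (fun β : ℝ => c * β * (1 - (2 : ℝ) ^ (k / β))) :=
  H_concaveOn_general c k hc
end
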